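/- arXiv:math/9405203 — 4 statements merged into one kernel-verified Lean document; each statement's English description precedes it below -/
import Mathlib

section
/- The meager downward-closed sets form a prime ideal in the lattice of downward-closed subsets of [ω]^ω: if X and Y are downward-closed subsets of [ω]^ω and X ∩ Y is meager (as a subset of 2^ω), then X is meager or Y is meager. -/
open Set Cardinal MeasureTheory

/-- The characteristic function of a set of naturals, as a point of Cantor space `2^ω`. -/
noncomputable def chi (x : Set ℕ) : ℕ → Bool := fun n => @decide (n ∈ x) (Classical.dec _)

/-- `[ω]^ω`: the collection of infinite subsets of ω. -/
def InfSets : Set (Set ℕ) := {x : Set ℕ | x.Infinite}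

/-- `X ⊆ [ω]^ω` is downward closed for almost-inclusion `x ≤ y ↔ (x \ y).Finite`. -/
def DownClosed (X : Set (Set ℕ)) : Prop :=
  ∀ y ∈ X, ∀ x : Set ℕ, x.Infinite → (x \ y).Finite → x ∈ X

/-- `X` is meager as a subset of Cantor space `2^ω` (product topology on `ℕ → Bool`). -/
def MeagerSet (X : Set (Set ℕ)) : Prop := IsMeagre (chi '' X)

/-- A partition of ω into consecutive finite intervals `I n = [e n, e (n+1))`. -/
structure IntervalPartition where
  e : ℕ → ℕ
  zero : e 0 = 0
  mono : StrictMono e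

/-- The `n`-th interval of an interval partition. -/
def IntervalPartition.I (P : IntervalPartition) (n : ℕ) : Set ℕ :=
  Set.Ico (P.e n) (P.e (n + 1))

/-- `X ⊆ [ω]^ω` is groupwise dense: downward closed, and for every partition of ω into
finite intervals, the union of some infinitely many of the intervals belongs to `X`. -/
def GroupwiseDense (X : Set (Set ℕ)) : Prop :=
  X ⊆ InfSets ∧ DownClosed X ∧
    ∀ P : IntervalPartition, ∃ A : Set ℕ, A.Infinite ∧ (⋃ n ∈ A, P.I n) ∈ X

/-- `g` eventually majorizes `f`. -/
def EvMaj (f g : ℕ → ℕ) : Prop := ∀ᶠ k in Filter.atTop, f k ≤ g k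

/-- `M(Π)`: the infinite subsets of ω including only finitely many intervals of `Π`. -/
def MSet (P : IntervalPartition) : Set (Set ℕ) :=
  {x : Set ℕ | x.Infinite ∧ {n : ℕ | P.I n ⊆ x}.Finite}

/-- The index `n` of the interval `I n` of `P` containing `k`. -/
def idx (P : IntervalPartition) (k : ℕ) : ℕ := Nat.findGreatest (fun n => P.e n ≤ k) k

/-- `F_Π(k)`: the largest element of `I (n+2)`, where `k ∈ I n`. -/
def FPart (P : IntervalPartition) (k : ℕ) : ℕ := P.e (idx P k + 3) - 1

/-- The groupwise density number 𝔤. -/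
noncomputable def gNum : Cardinal :=
  sInf {c : Cardinal | ∃ S : Set (Set (Set ℕ)), (∀ G ∈ S, GroupwiseDense G) ∧
    #S = c ∧ InfSets ∩ ⋂₀ S = ∅}

/-- The bounding number 𝔟. -/
noncomputable def bNum : Cardinal :=
  sInf {c : Cardinal | ∃ F : Set (ℕ → ℕ), #F = c ∧ ∀ g : ℕ → ℕ, ∃ f ∈ F, ¬ EvMaj f g}

/-- The dominating number 𝔡. -/
noncomputable def dNum : Cardinal :=
  sInf {c : Cardinal | ∃ F : Set (ℕ → ℕ), #F = c ∧ ∀ g : ℕ → ℕ, ∃ f ∈ F, EvMaj g f}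

/-- `B_M`: the ideal of meager downward-closed subsets of `[ω]^ω`. -/
def BM : Set (Set (Set ℕ)) := {X : Set (Set ℕ) | X ⊆ InfSets ∧ DownClosed X ∧ MeagerSet X}

/-- `add(B_M)`. -/
noncomputable def addBM : Cardinal :=
  sInf {c : Cardinal | ∃ S : Set (Set (Set ℕ)), S ⊆ BM ∧ #S = c ∧ ⋃₀ S ∉ BM}

/-- `cov(B_M)`. -/
noncomputable def covBM : Cardinal :=
  sInf {c : Cardinal | ∃ S : Set (Set (Set ℕ)), S ⊆ BM ∧ #S = c ∧
    {x : Set ℕ | x.Infinite ∧ xᶜ.Infinite} ⊆ ⋃₀ S}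

/-- `unif(B_M)`. -/
noncomputable def unifBM : Cardinal :=
  sInf {c : Cardinal | ∃ S : Set (Set ℕ), (∀ x ∈ S, x.Infinite ∧ xᶜ.Infinite) ∧ #S = c ∧
    ∀ X ∈ BM, ¬ S ⊆ X}

/-- `cof(B_M)`. -/
noncomputable def cofBM : Cardinal :=
  sInf {c : Cardinal | ∃ C : Set (Set (Set ℕ)), C ⊆ BM ∧ #C = c ∧
    ∀ X ∈ BM, ∃ Y ∈ C, X ⊆ Y}

/-- `X ⊆ [ω]^ω` is dense: every infinite `A` has an infinite subset `B ∈ X`. -/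
def DenseM (X : Set (Set ℕ)) : Prop :=
  ∀ A : Set ℕ, A.Infinite → ∃ B ⊆ A, B.Infinite ∧ B ∈ X

/-- 𝔤′: the least number of non-meager downward-closed ideals on ω with empty intersection. -/
noncomputable def gNum' : Cardinal :=
  sInf {c : Cardinal | ∃ S : Set (Set (Set ℕ)),
    (∀ X ∈ S, X ⊆ InfSets ∧ DownClosed X ∧ (∀ x ∈ X, ∀ y ∈ X, x ∪ y ∈ X) ∧ ¬ MeagerSet X) ∧
    #S = c ∧ InfSets ∩ ⋂₀ S = ∅}

/-- The splitting number 𝔰. -/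
noncomputable def sNum : Cardinal :=
  sInf {c : Cardinal | ∃ S : Set (Set ℕ), #S = c ∧
    ∀ x : Set ℕ, x.Infinite → ∃ y ∈ S, (x ∩ y).Infinite ∧ (x \ y).Infinite}

/-!
A downward-closed `Z ⊆ [ω]^ω` is meagre iff for some interval partition every `z ∈ Z` contains
only finitely many of its intervals. Such `Z` lies in the countable union of the closed nowhere
dense sets "from the `N`-th interval on, every interval meets the complement". Conversely, cover
`Z` by increasing closed nowhere dense sets `G n` and choose the partition so that any prefix of
length `e n + 1` extends, inside `I n`, to a cylinder missing `G n` (compactness makes the length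
uniform). If `z ∈ Z` contained infinitely many intervals, the Baire category theorem, applied to
the subsets of `z` containing the left ends of those intervals, would give an infinite `y ⊆ z`
outside every `G n`, although `y ∈ Z`.

For the theorem take such a partition `P` for `X ∩ Y`. If `X` and `Y` are not meagre, some `x ∈ X`
contains infinitely many `P`-intervals; coarsen `P` to `Q` so that each `Q`-interval contains one
of them. Some `y ∈ Y` contains infinitely many `Q`-intervals, and the union of the `P`-intervals
chosen inside them is an element of `X ∩ Y` containing infinitely many `P`-intervals.
-/

open PiNat

@[simp]
lemma chi_apply_eq_true {x : Set ℕ} {k : ℕ} : chi x k = true ↔ k ∈ x := by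
  simp [chi]

lemma DownClosed.inter {X Y : Set (Set ℕ)} (hX : DownClosed X) (hY : DownClosed Y) :
    DownClosed (X ∩ Y) := fun z hz x hx hxz => ⟨hX z hz.1 x hx hxz, hY z hz.2 x hx hxz⟩

lemma DownClosed.mem_of_subset {Z : Set (Set ℕ)} (hZ : DownClosed Z) {x y : Set ℕ} (hy : y ∈ Z)
    (hx : x.Infinite) (hxy : x ⊆ y) : x ∈ Z :=
  hZ y hy x hx (sdiff_eq_empty.2 hxy ▸ finite_empty)

namespace IntervalPartition

lemma e_mem_I (P : IntervalPartition) (n : ℕ) : P.e n ∈ P.I n :=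
  ⟨le_rfl, P.mono n.lt_succ_self⟩

lemma image_e_setOf_I_subset (P : IntervalPartition) (x : Set ℕ) :
    P.e '' {n | P.I n ⊆ x} ⊆ x := by
  rintro _ ⟨n, hn, rfl⟩
  exact hn (P.e_mem_I n)

lemma infinite_of_infinite_setOf_I_subset (P : IntervalPartition) {x : Set ℕ}
    (h : {n | P.I n ⊆ x}.Infinite) : x.Infinite :=
  (h.image P.mono.injective.injOn).mono (P.image_e_setOf_I_subset x)

lemma exists_coarsening (P : IntervalPartition) {A : Set ℕ} (hA : A.Infinite) :
    ∃ (Q : IntervalPartition) (σ : ℕ → ℕ), StrictMono σ ∧ (∀ m, σ m ∈ A) ∧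
      ∀ m, P.I (σ m) ⊆ Q.I m := by
  set σ := Nat.nth (· ∈ A)
  have hσ : StrictMono σ := Nat.nth_strictMono hA
  let e : ℕ → ℕ := fun
    | 0 => 0
    | m + 1 => P.e (σ m + 1)
  have he_le : ∀ m, e m ≤ P.e (σ m)
    | 0 => Nat.zero_le _
    | m + 1 => P.mono.monotone (hσ m.lt_succ_self)
  have he_succ : ∀ m, P.e (σ m) < e (m + 1) := fun m => P.mono (σ m).lt_succ_self
  refine ⟨⟨e, rfl, strictMono_nat_of_lt_succ fun m => (he_le m).trans_lt (he_succ m)⟩, σ, hσ,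
    Nat.nth_mem_of_infinite hA, fun m => Ico_subset_Ico (he_le m) le_rfl⟩

end IntervalPartition

section CylinderTopology

variable {α : Type*} [TopologicalSpace α] [DiscreteTopology α]

lemma exists_cylinder_subset_of_isOpen {U : Set (ℕ → α)} (hU : IsOpen U) {x : ℕ → α}
    (hx : x ∈ U) : ∃ n, PiNat.cylinder x n ⊆ U := by
  obtain ⟨_, ⟨y, n, rfl⟩, hxy, hyU⟩ :=
    (isTopologicalBasis_cylinders _).exists_subset_of_mem_open hx hU
  exact ⟨n, mem_cylinder_iff_eq.1 hxy ▸ hyU⟩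

lemma IsClosed.isNowhereDense_of_forall_exists_notMem_cylinder {S : Set (ℕ → α)}
    (hS : IsClosed S) (h : ∀ g N, ∃ g' ∈ PiNat.cylinder g N, g' ∉ S) : IsNowhereDense S := by
  refine hS.isNowhereDense_iff.2 (eq_empty_of_forall_notMem fun g hg => ?_)
  obtain ⟨N, hN⟩ := exists_cylinder_subset_of_isOpen isOpen_interior hg
  obtain ⟨g', hg', hg'S⟩ := h g N
  exact hg'S (interior_subset (hN hg'))

lemma continuous_of_forall_apply_congr {β : Type*} [TopologicalSpace β] {Φ : (ℕ → α) → ℕ → β}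
    (h : ∀ k g g', g k = g' k → Φ g k = Φ g' k) : Continuous Φ :=
  continuous_pi fun k =>
    ((continuous_of_discreteTopology (f := fun b : α => Φ (fun _ => b) k)).comp
      (continuous_apply k)).congr fun g => h k _ g rfl

lemma IsNowhereDense.exists_cylinder_disjoint {G : Set (ℕ → α)} (hG : IsNowhereDense G)
    (hGc : IsClosed G) (t : ℕ → α) (N : ℕ) :
    ∃ t' ∈ PiNat.cylinder t N, ∃ M, Disjoint (PiNat.cylinder t' M) G := by
  have hdense : Dense Gᶜ := interior_eq_empty_iff_dense_compl.1 (hGc.isNowhereDense_iff.1 hG)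
  obtain ⟨t', ht', ht'G⟩ :=
    hdense.inter_open_nonempty _ (isOpen_cylinder _ t N) ⟨t, self_mem_cylinder t N⟩
  obtain ⟨M, hM⟩ := exists_cylinder_subset_of_isOpen hGc.isOpen_compl ht'G
  exact ⟨t', ht', M, subset_compl_iff_disjoint_right.1 hM⟩

lemma IsNowhereDense.exists_uniform_cylinder_disjoint [CompactSpace α] {G : Set (ℕ → α)}
    (hG : IsNowhereDense G) (hGc : IsClosed G) (N : ℕ) :
    ∃ M, N ≤ M ∧ ∀ t, ∃ t' ∈ PiNat.cylinder t N, Disjoint (PiNat.cylinder t' M) G := by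
  let U : ℕ → Set (ℕ → α) :=
    fun M => {t | ∃ t' ∈ PiNat.cylinder t N, Disjoint (PiNat.cylinder t' M) G}
  have hUo : ∀ M, IsOpen (U M) := fun M => isOpen_iff_forall_mem_open.2 fun t ⟨t', ht', hM⟩ =>
    ⟨PiNat.cylinder t N, fun s hs => ⟨t', mem_cylinder_iff_eq.1 hs ▸ ht', hM⟩,
      isOpen_cylinder _ t N, self_mem_cylinder t N⟩
  have hU : Monotone U := fun M M' hMM' t ⟨t', ht', hM⟩ =>
    ⟨t', ht', hM.mono_left (cylinder_anti t' hMM')⟩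
  have hcover : Set.univ ⊆ ⋃ M, U M := fun t _ => by
    obtain ⟨t', ht', M, hM⟩ := hG.exists_cylinder_disjoint hGc t N
    exact mem_iUnion.2 ⟨M, t', ht', hM⟩
  obtain ⟨M, hM⟩ := isCompact_univ.elim_directed_cover U hUo hcover hU.directed_le
  exact ⟨max N M, le_max_left N M, fun t => hU (le_max_right N M) (hM (mem_univ t))⟩

end CylinderTopology

lemma IsClosed.isNowhereDense_of_isMeagre {X : Type*} [TopologicalSpace X] [BaireSpace X]
    {s : Set X} (hc : IsClosed s) (hs : IsMeagre s) : IsNowhereDense s := by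
  refine hc.isNowhereDense_iff.2 (not_nonempty_iff_eq_empty.1 fun hne => ?_)
  exact not_isMeagre_of_isOpen isOpen_interior hne (hs.mono interior_subset)

lemma IsMeagre.exists_monotone_isClosed_isNowhereDense_cover {X : Type*} [TopologicalSpace X]
    [BaireSpace X] {s : Set X} (hs : IsMeagre s) :
    ∃ G : ℕ → Set X, Monotone G ∧ (∀ n, IsClosed (G n)) ∧ (∀ n, IsNowhereDense (G n)) ∧
      s ⊆ ⋃ n, G n := by
  obtain ⟨S, hSnd, hSc, hsS⟩ := isMeagre_iff_countable_union_isNowhereDense.1 hs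
  obtain ⟨f, hf⟩ := (hSc.insert ∅).exists_eq_range (insert_nonempty _ _)
  have hfnd : ∀ n, IsNowhereDense (f n) := fun n => by
    obtain h | h := (hf ▸ mem_range_self n : f n ∈ insert ∅ S)
    · exact h ▸ isNowhereDense_empty
    · exact hSnd _ h
  let G : ℕ → Set X := Set.accumulate fun n => closure (f n)
  have hGc : ∀ n, IsClosed (G n) := fun n =>
    (finite_Iic n).isClosed_biUnion fun i _ => isClosed_closure
  have hGm : ∀ n, IsMeagre (G n) := fun n =>
    isMeagre_biUnion (finite_Iic n).countable fun i _ => (hfnd i).closure.isMeagre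
  refine ⟨G, Set.monotone_accumulate, hGc, fun n => (hGc n).isNowhereDense_of_isMeagre (hGm n),
    ?_⟩
  rw [Set.iUnion_accumulate]
  refine hsS.trans (sUnion_subset fun t ht => ?_)
  obtain ⟨n, rfl⟩ : t ∈ range f := hf ▸ mem_insert_of_mem _ ht
  exact subset_closure.trans (subset_iUnion (fun n => closure (f n)) n)

def IntervalPartition.Avoids (P : IntervalPartition) (G : ℕ → Set (ℕ → Bool)) : Prop :=
  ∀ n t, ∃ t' ∈ PiNat.cylinder t (P.e n + 1), Disjoint (PiNat.cylinder t' (P.e (n + 1))) (G n)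

lemma exists_intervalPartition_avoids {G : ℕ → Set (ℕ → Bool)}
    (hGnd : ∀ n, IsNowhereDense (G n)) (hGc : ∀ n, IsClosed (G n)) :
    ∃ P : IntervalPartition, P.Avoids G := by
  choose M hNM hM using fun n N => (hGnd n).exists_uniform_cylinder_disjoint (hGc n) N
  let e : ℕ → ℕ := fun n => Nat.rec 0 (fun n en => M n (en + 1)) n
  exact ⟨⟨e, rfl, strictMono_nat_of_lt_succ fun n => hNM n (e n + 1)⟩, fun n => hM n (e n + 1)⟩

lemma IntervalPartition.Avoids.exists_infinite_subset_chi_notMem_iUnion {P : IntervalPartition}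
    {G : ℕ → Set (ℕ → Bool)} (hP : P.Avoids G) (hGmono : Monotone G) (hGc : ∀ n, IsClosed (G n))
    {x : Set ℕ} (hx : {n | P.I n ⊆ x}.Infinite) :
    ∃ y ⊆ x, y.Infinite ∧ chi y ∉ ⋃ n, G n := by
  set E := P.e '' {n | P.I n ⊆ x}
  -- `ψ g` contains the left end of every interval inside `x`, so it is infinite, and is free on
  -- the rest of those intervals.
  let ψ : (ℕ → Bool) → Set ℕ := fun g => E ∪ {k ∈ x | g k = true}
  have hψ : ∀ k g g', g k = g' k → chi (ψ g) k = chi (ψ g') k := fun k g g' h => by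
    rw [Bool.eq_iff_iff]
    simp [ψ, h]
  have hnd : ∀ m, IsNowhereDense (chi ∘ ψ ⁻¹' G m) := fun m => by
    refine IsClosed.isNowhereDense_of_forall_exists_notMem_cylinder
      ((hGc m).preimage (continuous_of_forall_apply_congr hψ)) fun g N => ?_
    obtain ⟨n, hnx, hn⟩ := hx.exists_gt (max m N)
    obtain ⟨t', ht', hdisj⟩ := hP n (chi (ψ g))
    let g' : ℕ → Bool := fun k => if P.e n < k then t' k else g k
    have hg' : chi (ψ g') ∈ PiNat.cylinder t' (P.e (n + 1)) := fun k hk => by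
      by_cases hkn : P.e n < k
      · have hkx : k ∈ x := hnx ⟨hkn.le, hk⟩
        have hkE : k ∉ E := by
          rintro ⟨j, -, rfl⟩
          have := P.mono.lt_iff_lt.1 hkn
          have := P.mono.lt_iff_lt.1 hk
          omega
        rw [Bool.eq_iff_iff]
        simp [ψ, g', hkn, hkx, hkE]
      · rw [← hψ k g g' (if_neg hkn).symm]
        exact (ht' k (by omega)).symm
    refine ⟨g', fun k hk => if_neg ?_, fun hG => disjoint_left.1 hdisj hg' (hGmono ?_ hG)⟩
    · have := P.mono.le_apply (x := n)
      omega
    · omega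
  obtain ⟨g, hg⟩ : (⋃ m, chi ∘ ψ ⁻¹' G m)ᶜ.Nonempty := nonempty_compl.2 fun h =>
    not_isMeagre_of_isOpen isOpen_univ univ_nonempty (h ▸ isMeagre_iUnion fun m => (hnd m).isMeagre)
  exact ⟨ψ g, union_subset (P.image_e_setOf_I_subset x) (sep_subset _ _),
    (hx.image P.mono.injective.injOn).mono subset_union_left, by simpa using hg⟩

lemma meagerSet_of_forall_finite_setOf_I_subset (P : IntervalPartition) {X : Set (Set ℕ)}
    (h : ∀ x ∈ X, {n | P.I n ⊆ x}.Finite) : MeagerSet X := by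
  let D : ℕ → Set (ℕ → Bool) := fun N => ⋂ n ≥ N, ⋃ k ∈ P.I n, {f | f k = false}
  have hD : ∀ N, IsNowhereDense (D N) := fun N => by
    refine IsClosed.isNowhereDense_of_forall_exists_notMem_cylinder
      (isClosed_biInter fun n _ => (finite_Ico _ _).isClosed_biUnion fun k _ =>
        isClosed_eq (continuous_apply k) continuous_const) fun g L => ?_
    refine ⟨fun k => if k < L then g k else true, fun k hk => if_pos hk, fun hg => ?_⟩
    obtain ⟨k, hk, hkf⟩ := mem_iUnion₂.1 (mem_iInter₂.1 hg (max N L) (le_max_left N L))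
    have hLk : L ≤ k := (le_max_right N L).trans (P.mono.le_apply.trans hk.1)
    simp [hLk.not_gt] at hkf
  refine (isMeagre_iUnion fun N => (hD N).isMeagre).mono ?_
  rintro _ ⟨x, hx, rfl⟩
  obtain ⟨N, hN⟩ := (h x hx).bddAbove
  refine mem_iUnion.2 ⟨N + 1, mem_iInter₂.2 fun n hn => ?_⟩
  obtain ⟨k, hk, hkx⟩ := not_subset.1 fun hsub : P.I n ⊆ x => absurd (hN hsub) (by omega)
  exact mem_iUnion₂.2 ⟨k, hk, by simpa [chi] using hkx⟩

theorem DownClosed.meagerSet_iff {Z : Set (Set ℕ)} (hZ : DownClosed Z) :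
    MeagerSet Z ↔ ∃ P : IntervalPartition, ∀ z ∈ Z, {n | P.I n ⊆ z}.Finite := by
  refine ⟨fun hm => ?_, fun ⟨P, hP⟩ => meagerSet_of_forall_finite_setOf_I_subset P hP⟩
  obtain ⟨G, hGmono, hGc, hGnd, hZG⟩ := IsMeagre.exists_monotone_isClosed_isNowhereDense_cover hm
  obtain ⟨P, hP⟩ := exists_intervalPartition_avoids hGnd hGc
  refine ⟨P, fun z hz => not_infinite.1 fun hinf => ?_⟩
  obtain ⟨y, hyz, hy, hyG⟩ := hP.exists_infinite_subset_chi_notMem_iUnion hGmono hGc hinf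
  exact hyG (hZG (mem_image_of_mem chi (hZ.mem_of_subset hz hy hyz)))

theorem stmt3_general (X Y : Set (Set ℕ))
    (hdX : DownClosed X) (hdY : DownClosed Y) (h : MeagerSet (X ∩ Y)) :
    MeagerSet X ∨ MeagerSet Y := by
  obtain ⟨P, hP⟩ := (hdX.inter hdY).meagerSet_iff.1 h
  by_contra! hXY
  simp only [hdX.meagerSet_iff, hdY.meagerSet_iff, not_exists, not_forall] at hXY
  obtain ⟨x, hx, hxP : {n | P.I n ⊆ x}.Infinite⟩ := hXY.1 P
  obtain ⟨Q, σ, hσ, hσx, hσQ⟩ := P.exists_coarsening hxP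
  obtain ⟨y, hy, hyQ : {m | Q.I m ⊆ y}.Infinite⟩ := hXY.2 Q
  set w := ⋃ m ∈ {m | Q.I m ⊆ y}, P.I (σ m)
  have hwx : w ⊆ x := iUnion₂_subset fun m _ => hσx m
  have hwy : w ⊆ y := iUnion₂_subset fun m hm => (hσQ m).trans hm
  have hwP : {n | P.I n ⊆ w}.Infinite := (hyQ.image hσ.injective.injOn).mono
    (image_subset_iff.2 fun m hm => subset_biUnion_of_mem (u := fun m => P.I (σ m)) hm)
  have hw := P.infinite_of_infinite_setOf_I_subset hwP
  exact hwP (hP w ⟨hdX.mem_of_subset hx hw hwx, hdY.mem_of_subset hy hw hwy⟩)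

/-- The meager sets form a prime ideal in the lattice of downward-closed subsets of `[ω]^ω`. -/
theorem stmt3 (X Y : Set (Set ℕ)) (hX : X ⊆ InfSets) (hY : Y ⊆ InfSets)
    (hdX : DownClosed X) (hdY : DownClosed Y) (h : MeagerSet (X ∩ Y)) :
    MeagerSet X ∨ MeagerSet Y :=
  stmt3_general X Y hdX hdY h
end

section
/- Let G ⊆ [ω]^ω be groupwise dense and let (I_n)_{n∈ω} be an interval partition of ω. Then the set H = {x ∈ [ω]^ω : ⋃_{n∈x} I_n ∈ G} is groupwise dense. -/
/-!
Downward closure transfers because a finite set of indices contributes only finitely many points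
to `⋃_{n ∈ x} I n`. For groupwise density, given an interval partition `(J_k)` of the indices,
merge the intervals of `P` along it: the coarser partition `K_k = ⋃_{n ∈ J_k} I n` has, by the
density of `G`, infinitely many blocks `k ∈ A` whose union lies in `G`, and that union is
`⋃_{n ∈ ⋃_{k ∈ A} J_k} I n`.
-/

open Set Cardinal MeasureTheory

theorem Monotone.biUnion_Ico_Ico_succ {β : Type*} [LinearOrder β] {f : ℕ → β} (hf : Monotone f)
    (a b : ℕ) : ⋃ n ∈ Ico a b, Ico (f n) (f (n + 1)) = Ico (f a) (f b) := by
  rcases le_total b a with hba | hab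
  · rw [Ico_eq_empty_of_le hba, Ico_eq_empty_of_le (hf hba), biUnion_empty]
  induction b, hab using Nat.le_induction with
  | base => simp
  | succ c hac ih =>
    rw [← Order.succ_eq_add_one, Order.Ico_succ_right_eq_insert hac, biUnion_insert,
      Order.succ_eq_add_one, ih, union_comm,
      Ico_union_Ico_eq_Ico (hf hac) (hf (c.le_add_right 1))]

namespace IntervalPartition

def coarsen (P Q : IntervalPartition) : IntervalPartition where
  e k := P.e (Q.e k)
  zero := by rw [Q.zero, P.zero]
  mono := P.mono.comp Q.mono

theorem biUnion_I_Ico (P : IntervalPartition) (a b : ℕ) :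
    ⋃ n ∈ Ico a b, P.I n = Ico (P.e a) (P.e b) :=
  P.mono.monotone.biUnion_Ico_Ico_succ a b

theorem biUnion_I_biUnion_I_coarsen (P Q : IntervalPartition) (A : Set ℕ) :
    ⋃ m ∈ ⋃ k ∈ A, Q.I k, P.I m = ⋃ k ∈ A, (P.coarsen Q).I k := by
  simp only [biUnion_iUnion]
  exact iUnion₂_congr fun k _ => P.biUnion_I_Ico _ _

theorem infinite_biUnion_I (P : IntervalPartition) {x : Set ℕ} (hx : x.Infinite) :
    (⋃ n ∈ x, P.I n).Infinite := by
  refine (hx.image P.mono.injective.injOn).mono ?_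
  rintro _ ⟨n, hn, rfl⟩
  exact mem_biUnion hn ⟨le_rfl, P.mono n.lt_succ_self⟩

end IntervalPartition

theorem DownClosed.setOf_biUnion_I {G : Set (Set ℕ)} (hG : DownClosed G)
    (P : IntervalPartition) : DownClosed {x : Set ℕ | x.Infinite ∧ (⋃ n ∈ x, P.I n) ∈ G} := by
  rintro y ⟨-, hyG⟩ x hx hxy
  refine ⟨hx, hG _ hyG _ (P.infinite_biUnion_I hx) ?_⟩
  exact (hxy.biUnion fun n _ => finite_Ico _ _).subset (biUnion_sdiff_biUnion_subset P.I x y)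

/-- If `G` is groupwise dense and `(I n)` is an interval partition, then
`H = {x ∈ [ω]^ω : ⋃_{n ∈ x} I n ∈ G}` is groupwise dense. -/
theorem stmt4 (G : Set (Set ℕ)) (hG : GroupwiseDense G) (P : IntervalPartition) :
    GroupwiseDense {x : Set ℕ | x.Infinite ∧ (⋃ n ∈ x, P.I n) ∈ G} := by
  obtain ⟨-, hGdown, hGparts⟩ := hG
  refine ⟨fun x hx => hx.1, hGdown.setOf_biUnion_I P, fun Q => ?_⟩
  obtain ⟨A, hA, hAG⟩ := hGparts (P.coarsen Q)
  refine ⟨A, hA, Q.infinite_biUnion_I hA, ?_⟩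
  rwa [P.biUnion_I_biUnion_I_coarsen Q A]
end

section
/- Let Π = (I_n)_{n∈ω} be an interval partition of ω (intervals listed in natural order) and define F_Π : ω → ω by F_Π(k) = max I_{n+2} where n is such that k ∈ I_n. Let f : ω → ω and let x be an infinite, co-infinite subset of ω such that for every k ∈ ω the second element of ω ∖ x greater than k is larger than f(k). If x ∈ M(Π), then F_Π eventually majorizes f (f(k) ≤ F_Π(k) for all but finitely many k). -/
open Set Cardinal MeasureTheory

/-! Past the last interval contained in `x`, every interval meets `ω ∖ x`. For such `k ∈ I n`,
the two intervals `I (n+1)` and `I (n+2)` lie in `(k, F_Π(k)]`, so if `f k > F_Π(k)` they yield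
two distinct elements of `ω ∖ x` in `(k, f k]`. -/

open Filter

namespace IntervalPartition

variable (P : IntervalPartition)

theorem le_idx {n k : ℕ} (h : P.e n ≤ k) : n ≤ idx P k :=
  Nat.le_findGreatest (P.mono.le_apply.trans h) h

theorem lt_e_idx_succ (k : ℕ) : k < P.e (idx P k + 1) := by
  by_contra! h
  have := P.le_idx h
  omega

theorem tendsto_idx_atTop : Tendsto (idx P) atTop atTop :=
  tendsto_atTop_atTop.2 fun n => ⟨P.e n, fun _ hk => P.le_idx hk⟩

theorem I_subset_Ioc_FPart {k j : ℕ} (hj : idx P k < j) (hj' : j ≤ idx P k + 2) :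
    P.I j ⊆ Ioc k (FPart P k) := by
  rintro m ⟨hjm, hmj⟩
  have hlow : P.e (idx P k + 1) ≤ P.e j := P.mono.monotone hj
  have hhigh : P.e (j + 1) ≤ P.e (idx P k + 3) := P.mono.monotone (by omega)
  have := P.lt_e_idx_succ k
  exact ⟨by omega, by unfold FPart; omega⟩

theorem eventually_not_I_subset {x : Set ℕ} (hx : x ∈ MSet P) :
    ∀ᶠ n in atTop, ¬ P.I n ⊆ x := by
  rw [← Nat.cofinite_eq_atTop]
  exact hx.2.eventually_cofinite_notMem

end IntervalPartition

theorem stmt8_general (P : IntervalPartition) (f : ℕ → ℕ) (x : Set ℕ)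
    (hsecond : ∀ k : ℕ, Set.Subsingleton {m : ℕ | k < m ∧ m ≤ f k ∧ m ∉ x})
    (hx : x ∈ MSet P) :
    EvMaj f (FPart P) := by
  have hgaps : ∀ᶠ k in atTop, ∀ j ≥ idx P k, ¬ P.I j ⊆ x :=
    P.tendsto_idx_atTop.eventually (eventually_forall_ge_atTop.2 (P.eventually_not_I_subset hx))
  filter_upwards [hgaps] with k hk
  by_contra! hlt
  set n := idx P k
  obtain ⟨m₁, hm₁, hm₁x⟩ := not_subset.1 (hk (n + 1) (by omega))
  obtain ⟨m₂, hm₂, hm₂x⟩ := not_subset.1 (hk (n + 2) (by omega))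
  have hm₁' := P.I_subset_Ioc_FPart (k := k) (j := n + 1) (by omega) (by omega) hm₁
  have hm₂' := P.I_subset_Ioc_FPart (k := k) (j := n + 2) (by omega) (by omega) hm₂
  have heq : m₁ = m₂ :=
    hsecond k ⟨hm₁'.1, hm₁'.2.trans hlt.le, hm₁x⟩ ⟨hm₂'.1, hm₂'.2.trans hlt.le, hm₂x⟩
  have hsep : m₁ < m₂ := hm₁.2.trans_le hm₂.1
  omega

/-- Lemma 2: if `x` is infinite and co-infinite, for every `k` the second element of
`ω ∖ x` greater than `k` exceeds `f k` (equivalently, `ω ∖ x` has at most one element in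
`(k, f k]`), and `x ∈ M(Π)`, then `F_Π` eventually majorizes `f`. -/
theorem stmt8 (P : IntervalPartition) (f : ℕ → ℕ) (x : Set ℕ)
    (hinf : x.Infinite) (hcoinf : xᶜ.Infinite)
    (hsecond : ∀ k : ℕ, Set.Subsingleton {m : ℕ | k < m ∧ m ≤ f k ∧ m ∉ x})
    (hx : x ∈ MSet P) :
    EvMaj f (FPart P) :=
  stmt8_general P f x hsecond hx
end

section
/- 𝔡 ≤ cov(B_M): every family of meager downward-closed subsets of [ω]^ω whose union contains every infinite, co-infinite subset of ω has cardinality at least 𝔡. -/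
open Set Cardinal MeasureTheory

/-!
A meager downward-closed `X` has an interval partition `P` such that every member of `X` contains
only finitely many intervals of `P`: take decreasing dense open sets `U n` whose intersection misses
`X`, and choose on the `n`-th interval a pattern with a `true` bit that forces membership in `U n`
whatever happens elsewhere. If `x ∈ X` contained infinitely many intervals, following these
patterns on them would give an infinite subset of `x` lying in every `U n`, hence outside `X`.

Given `g`, let `Q` be a partition whose endpoints grow faster than `g`, and cover ω by the three
infinite co-infinite sets `Q.blocks r`, unions of double intervals `Q.I m ∪ Q.I (m + 1)`. If
`Q.blocks r ∈ X i`, then for large `k` the interval `(P i).I (k + 1)` does not fit into a double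
interval of `Q` starting by `k`, so `k ↦ (P i).e (k + 2)` outgrows `Q` there. The maxima of three
such functions form a dominating family of size `#ι ^ 3`.
-/

open Filter PiNat

lemma chi_eq_true_iff {x : Set ℕ} {j : ℕ} : chi x j = true ↔ j ∈ x := by
  simp [chi]

namespace IntervalPartition

variable (P : IntervalPartition)

lemma eq_of_mem_I {j n n' : ℕ} (h : j ∈ P.I n) (h' : j ∈ P.I n') : n = n' := by
  have key : ∀ {a b : ℕ}, j ∈ P.I a → j ∈ P.I b → a ≤ b := fun ha hb => by
    by_contra hab
    exact not_lt.2 ha.1 (hb.2.trans_le (P.mono.monotone (by omega)))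
  exact le_antisymm (key h h') (key h' h)

lemma mem_I_idx (k : ℕ) : k ∈ P.I (idx P k) := by
  refine ⟨Nat.findGreatest_spec (P := fun n => P.e n ≤ k) (Nat.zero_le k) (by simp [P.zero]), ?_⟩
  by_contra h
  exact Nat.findGreatest_is_greatest (Nat.lt_succ_self _)
    (P.mono.le_apply.trans (not_lt.1 h)) (not_lt.1 h)

lemma exists_infinite_subset_frequently_eq (t : ℕ → ℕ → Bool)
    (ht : ∀ n, ∃ j ∈ P.I n, t n j = true) {x : Set ℕ} (hx : {n | P.I n ⊆ x}.Infinite) :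
    ∃ y ⊆ x, y.Infinite ∧ ∃ᶠ n in atTop, ∀ j ∈ P.I n, chi y j = t n j := by
  refine ⟨{j | ∃ n, P.I n ⊆ x ∧ j ∈ P.I n ∧ t n j = true}, fun j ⟨n, hn, hj, _⟩ => hn hj,
    ?_, Nat.frequently_atTop_iff_infinite.2 (hx.mono fun n hn j hj => ?_)⟩
  · refine infinite_of_forall_exists_gt fun a => ?_
    obtain ⟨n, hnx, han⟩ := hx.exists_gt a
    obtain ⟨j, hj, htj⟩ := ht n
    exact ⟨j, ⟨n, hnx, hj, htj⟩, han.trans_le (P.mono.le_apply.trans hj.1)⟩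
  · rw [Bool.eq_iff_iff, chi_eq_true_iff]
    exact ⟨fun ⟨n', _, hj', htj⟩ => P.eq_of_mem_I hj' hj ▸ htj, fun htj => ⟨n, hn, hj, htj⟩⟩

lemma eventually_le_e_of_finite {x : Set ℕ} (hx : {n | P.I n ⊆ x}.Finite) :
    ∀ᶠ k in atTop, ∀ a b, a ≤ k → Ico a b ⊆ x → b ≤ P.e (k + 2) := by
  -- otherwise `[a, b)` would contain `I (k + 1)`
  have hnot : ∀ᶠ n in atTop, ¬ P.I n ⊆ x := Nat.cofinite_eq_atTop ▸ hx.eventually_cofinite_notMem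
  filter_upwards [(tendsto_add_atTop_nat 1).eventually hnot] with k hk a b hak hab
  by_contra hb
  refine hk (Subset.trans (fun j hj => ?_) hab)
  exact ⟨hak.trans ((Nat.le_succ k).trans (P.mono.le_apply.trans hj.1)), hj.2.trans (not_le.1 hb)⟩

def blocks (r : ℕ) : Set ℕ := ⋃ n, Ico (P.e (3 * n + r)) (P.e (3 * n + r + 2))

lemma Ico_subset_blocks (m : ℕ) : Ico (P.e m) (P.e (m + 2)) ⊆ P.blocks (m % 3) := by
  have hm : 3 * (m / 3) + m % 3 = m := Nat.div_add_mod m 3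
  exact subset_iUnion_of_subset (m / 3) (by rw [hm])

lemma blocks_infinite (r : ℕ) : (P.blocks r).Infinite :=
  infinite_of_forall_exists_gt fun a => ⟨P.e (3 * (a + 1) + r),
    mem_iUnion.2 ⟨a + 1, le_rfl, P.mono (by omega)⟩,
    by have := P.mono.le_apply (x := 3 * (a + 1) + r); omega⟩

lemma compl_blocks_infinite (r : ℕ) : (P.blocks r)ᶜ.Infinite := by
  refine infinite_of_forall_exists_gt fun a => ⟨P.e (3 * a + r + 2), fun h => ?_,
    by have := P.mono.le_apply (x := 3 * a + r + 2); omega⟩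
  obtain ⟨n, h1, h2⟩ := mem_iUnion.1 h
  have := P.mono.le_iff_le.1 h1
  have := P.mono.lt_iff_lt.1 h2
  omega

def ofBound (g : ℕ → ℕ) : IntervalPartition where
  e m := (fun n => n + 1 + (Finset.range n).sup g)^[m] 0
  zero := rfl
  mono := strictMono_nat_of_lt_succ fun m => by
    rw [Function.iterate_succ_apply']
    omega

lemma le_ofBound_e {g : ℕ → ℕ} {k m : ℕ} (hk : k < (ofBound g).e (m + 1)) :
    g k ≤ (ofBound g).e (m + 2) := by
  have hsucc : (ofBound g).e (m + 2) =
      (ofBound g).e (m + 1) + 1 + (Finset.range ((ofBound g).e (m + 1))).sup g :=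
    Function.iterate_succ_apply' _ _ _
  have := Finset.le_sup (f := g) (Finset.mem_range.2 hk)
  omega

end IntervalPartition

lemma IsMeagre.exists_antitone_isOpen_dense {Y : Type*} [TopologicalSpace Y] [BaireSpace Y]
    {s : Set Y} (hs : IsMeagre s) :
    ∃ U : ℕ → Set Y, Antitone U ∧ (∀ n, IsOpen (U n)) ∧ (∀ n, Dense (U n)) ∧
      Disjoint (⋂ n, U n) s := by
  obtain ⟨t, hts, htG, htd⟩ := mem_residual.1 hs
  obtain ⟨V, hVo, rfl⟩ := htG.eq_iInter_nat
  refine ⟨fun n => ⋂ m ∈ Iic n, V m, fun a b hab => biInter_mono (Iic_subset_Iic.2 hab)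
    fun _ _ => le_rfl, fun n => (finite_Iic n).isOpen_biInter fun m _ => hVo m,
    fun n => htd.mono (subset_iInter₂ fun m _ => iInter_subset V m), ?_⟩
  refine subset_compl_iff_disjoint_right.1 (Subset.trans ?_ hts)
  exact iInter_mono fun n => biInter_subset_of_mem (mem_Iic.2 le_rfl)

lemma exists_common_continuation_mem {U : Set (ℕ → Bool)} (hUo : IsOpen U) (hUd : Dense U)
    (S : Finset (ℕ → Bool)) (l : ℕ) :
    ∃ L, l ≤ L ∧ ∃ t : ℕ → Bool, ∀ σ ∈ S, ∀ f : ℕ → Bool,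
      (∀ j < l, f j = σ j) → (∀ j ∈ Ico l L, f j = t j) → f ∈ U := by
  classical
  induction S using Finset.induction_on with
  | empty => exact ⟨l, le_rfl, fun _ => false, by simp⟩
  | insert σ S _ ih =>
    obtain ⟨L, hlL, t, ht⟩ := ih
    -- a cylinder inside `U` extending `σ` followed by the old continuation `t`
    set σt : ℕ → Bool := fun j => if j < l then σ j else t j
    obtain ⟨p, hpσt, hpU⟩ := hUd.inter_open_nonempty _ (isOpen_cylinder _ σt L)
      ⟨σt, self_mem_cylinder σt L⟩
    obtain ⟨_, ⟨q, N, rfl⟩, hpq, hqU⟩ :=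
      (isTopologicalBasis_cylinders _).exists_subset_of_mem_open hpU hUo
    rw [← mem_cylinder_iff_eq.1 hpq] at hqU
    have hpt : ∀ j ∈ Ico l L, p j = t j := fun j hj => by
      simpa [σt, not_lt.2 hj.1] using hpσt j hj.2
    refine ⟨max L N, hlL.trans (le_max_left _ _), p, ?_⟩
    intro τ hτ f hfτ hfp
    rcases Finset.mem_insert.1 hτ with rfl | hτS
    · refine hqU fun j hj => ?_
      rcases lt_or_ge j l with hjl | hjl
      · simpa [hfτ j hjl, σt, hjl] using (hpσt j (hjl.trans_le hlL)).symm
      · exact hfp j ⟨hjl, hj.trans_le (le_max_right _ _)⟩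
    · exact ht τ hτS f hfτ fun j hj =>
        (hfp j ⟨hj.1, hj.2.trans_le (le_max_left _ _)⟩).trans (hpt j hj)

lemma exists_block_mem_of_isOpen_of_dense {U : Set (ℕ → Bool)} (hUo : IsOpen U) (hUd : Dense U)
    (l : ℕ) :
    ∃ L, l < L ∧ ∃ t : ℕ → Bool, (∃ j ∈ Ico l L, t j = true) ∧
      ∀ f : ℕ → Bool, (∀ j ∈ Ico l L, f j = t j) → f ∈ U := by
  classical
  let truncate : (Fin l → Bool) → ℕ → Bool := fun s j => if h : j < l then s ⟨j, h⟩ else false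
  obtain ⟨L, hlL, t, ht⟩ :=
    exists_common_continuation_mem hUo hUd (Finset.univ.image truncate) l
  refine ⟨L + 1, by omega, Function.update t L true, ⟨L, ⟨hlL, by omega⟩, by simp⟩, ?_⟩
  intro f hf
  refine ht (truncate fun j => f j) (Finset.mem_image_of_mem _ (Finset.mem_univ _)) f
    (fun j hj => by simp [truncate, hj]) fun j hj => ?_
  simpa [Function.update_of_ne hj.2.ne] using hf j ⟨hj.1, Nat.lt_succ_of_lt hj.2⟩

lemma exists_intervalPartition_of_meagerSet {X : Set (Set ℕ)} (hXD : DownClosed X)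
    (hXM : MeagerSet X) : ∃ P : IntervalPartition, ∀ x ∈ X, {n | P.I n ⊆ x}.Finite := by
  obtain ⟨U, hUanti, hUo, hUd, hUX⟩ := hXM.exists_antitone_isOpen_dense
  choose L hlL t ht hLU using fun l n => exists_block_mem_of_isOpen_of_dense (hUo n) (hUd n) l
  let e : ℕ → ℕ := fun n => Nat.rec 0 (fun n en => L en n) n
  let P : IntervalPartition := ⟨e, rfl, strictMono_nat_of_lt_succ fun n => hlL (e n) n⟩
  refine ⟨P, fun x hx => not_infinite.1 fun hinf => ?_⟩
  obtain ⟨y, hyx, hyinf, hyU⟩ :=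
    P.exists_infinite_subset_frequently_eq (fun n => t (e n) n) (fun n => ht (e n) n) hinf
  have hyX : y ∈ X := hXD x hx y hyinf (by simp [sdiff_eq_empty.2 hyx])
  refine disjoint_left.1 hUX (mem_iInter.2 fun m => ?_) (mem_image_of_mem chi hyX)
  obtain ⟨n, hmn, hn⟩ := (frequently_atTop.1 hyU) m
  exact hUanti hmn (hLU (e n) n _ hn)

lemma exists_evMaj_sup_e {ι : Type*} (P : ι → IntervalPartition)
    (hP : ∀ x : Set ℕ, x.Infinite → xᶜ.Infinite → ∃ i, {n | (P i).I n ⊆ x}.Finite)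
    (g : ℕ → ℕ) :
    ∃ i : Fin 3 → ι, EvMaj g fun k => Finset.univ.sup fun r => (P (i r)).e (k + 2) := by
  set Q := IntervalPartition.ofBound g
  choose i hi using fun r : Fin 3 => hP _ (Q.blocks_infinite r) (Q.compl_blocks_infinite r)
  refine ⟨i, ?_⟩
  filter_upwards [eventually_all.2 fun r => (P (i r)).eventually_le_e_of_finite (hi r)]
    with k hk
  obtain ⟨hmk, hkm⟩ := Q.mem_I_idx k
  let r : Fin 3 := ⟨idx Q k % 3, Nat.mod_lt _ (by norm_num)⟩
  calc g k ≤ Q.e (idx Q k + 2) := IntervalPartition.le_ofBound_e hkm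
    _ ≤ (P (i r)).e (k + 2) := hk r _ _ hmk (Q.Ico_subset_blocks _)
    _ ≤ _ := Finset.le_sup (f := fun r => (P (i r)).e (k + 2)) (Finset.mem_univ r)

lemma Set.Finite.exists_forall_not_evMaj {F : Set (ℕ → ℕ)} (hF : F.Finite) :
    ∃ g : ℕ → ℕ, ∀ f ∈ F, ¬ EvMaj g f := by
  refine ⟨fun k => hF.toFinset.sup (fun f => f k) + 1, fun f hf hgf => ?_⟩
  obtain ⟨k, hk⟩ := hgf.exists
  have := Finset.le_sup (f := fun f : ℕ → ℕ => f k) (hF.mem_toFinset.2 hf)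
  exact absurd (hk.trans this) (Nat.not_succ_le_self _)

lemma dNum_le_mk {F : Set (ℕ → ℕ)} (hF : ∀ g, ∃ f ∈ F, EvMaj g f) : dNum ≤ #F :=
  csInf_le (OrderBot.bddBelow _) ⟨F, rfl, hF⟩

/-- 𝔡 ≤ cov(B_M): any family of meager downward-closed subsets of `[ω]^ω` covering all
infinite co-infinite subsets of ω has cardinality at least 𝔡. -/
theorem stmt9 (ι : Type) (X : ι → Set (Set ℕ))
    (hX : ∀ i, X i ⊆ InfSets ∧ DownClosed (X i) ∧ MeagerSet (X i))
    (hcover : {x : Set ℕ | x.Infinite ∧ xᶜ.Infinite} ⊆ ⋃ i, X i) :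
    dNum ≤ #ι := by
  choose P hP using fun i => exists_intervalPartition_of_meagerSet (hX i).2.1 (hX i).2.2
  have hcoverP : ∀ x : Set ℕ, x.Infinite → xᶜ.Infinite → ∃ i, {n | (P i).I n ⊆ x}.Finite :=
    fun x hx hxc => (mem_iUnion.1 (hcover ⟨hx, hxc⟩)).imp fun i => hP i x
  set F := range fun (i : Fin 3 → ι) k => Finset.univ.sup fun r => (P (i r)).e (k + 2)
  have hF : ∀ g, ∃ f ∈ F, EvMaj g f := fun g => by
    obtain ⟨i, hi⟩ := exists_evMaj_sup_e P hcoverP g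
    exact ⟨_, mem_range_self i, hi⟩
  have : Infinite ι := by
    by_contra hfin
    have := not_infinite_iff_finite.1 hfin
    obtain ⟨g, hg⟩ := (finite_range _ : F.Finite).exists_forall_not_evMaj
    obtain ⟨f, hfF, hgf⟩ := hF g
    exact hg f hfF hgf
  calc dNum ≤ #F := dNum_le_mk hF
    _ ≤ #(Fin 3 → ι) := mk_range_le
    _ = #ι ^ 3 := by simp [← Cardinal.power_natCast]
    _ ≤ #ι := power_nat_le (aleph0_le_mk ι)
end
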